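/- arXiv:1910.14616 — 2 statements merged into one kernel-verified Lean document; each statement's English description precedes it below -/
import Mathlib

section
/- Let C := (I − γ diag(σ))² + γ² diag(σ)² + γ² σσᵀ with σ ∈ R^d having entries 0 < μ ≤ σ_i ≤ L, and let S := tr(Σ) = Σ_i σ_i. If γ ≤ 1/(2(L + S)), then C is a nonnegative matrix and ‖C 1‖_∞ ≤ 1 − γμ, i.e., every row sum of C is at most 1 − γμ; consequently ‖Cⁿ 1‖_∞ ≤ (1 − γμ)ⁿ. -/
open Matrix Finset

/-- For `C := (I − γ diag(σ))² + γ² diag(σ)² + γ² σσᵀ` with `0 < μ ≤ σᵢ ≤ L` and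
`S := Σᵢ σᵢ`, if the stepsize satisfies `0 < γ ≤ 1/(2(L + S))`, then `C` is a nonnegative
matrix, every row sum of `C` is at most `1 − γμ` (i.e. `‖C 1‖_∞ ≤ 1 − γμ`), and
consequently `‖Cⁿ 1‖_∞ ≤ (1 − γμ)ⁿ` for all `n`. -/
theorem sgd_eigenvalue_matrix_contraction
    {d : ℕ} (σv : Fin d → ℝ) (μ L γ : ℝ) (hμ : 0 < μ)
    (hbounds : ∀ i, μ ≤ σv i ∧ σv i ≤ L)
    (hγpos : 0 < γ) (hγ : γ ≤ 1 / (2 * (L + ∑ i, σv i))) :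
    (∀ i j, 0 ≤ (((1 - γ • diagonal σv) ^ 2 + γ ^ 2 • diagonal σv ^ 2
        + γ ^ 2 • vecMulVec σv σv) : Matrix (Fin d) (Fin d) ℝ) i j) ∧
    (∀ i, (((1 - γ • diagonal σv) ^ 2 + γ ^ 2 • diagonal σv ^ 2
        + γ ^ 2 • vecMulVec σv σv).mulVec (fun _ => (1 : ℝ))) i ≤ 1 - γ * μ) ∧
    (∀ n : ℕ, ∀ i,
      |((((1 - γ • diagonal σv) ^ 2 + γ ^ 2 • diagonal σv ^ 2
          + γ ^ 2 • vecMulVec σv σv) ^ n).mulVec (fun _ => (1 : ℝ))) i|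
        ≤ (1 - γ * μ) ^ n) := by
  set C : Matrix (Fin d) (Fin d) ℝ :=
    (1 - γ • diagonal σv) ^ 2 + γ ^ 2 • diagonal σv ^ 2 + γ ^ 2 • vecMulVec σv σv with hC
  set S : ℝ := ∑ i, σv i with hS
  have hentry : ∀ i j, C i j
      = (if i = j then (1 - γ * σv i)^2 + γ^2 * (σv i)^2 else 0) + γ^2 * (σv i * σv j) := by
    intro i j
    have h1 : (1 - γ • diagonal σv : Matrix (Fin d) (Fin d) ℝ)
        = diagonal (fun i => 1 - γ * σv i) := by
      ext a b
      by_cases h : a = b <;> simp [h, diagonal, Matrix.one_apply]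
    rw [hC, h1]
    simp [Matrix.add_apply, Matrix.smul_apply, vecMulVec_apply, diagonal_pow, diagonal_apply]
    by_cases h : i = j <;> simp [h]
  have hσpos : ∀ i, 0 < σv i := fun i => lt_of_lt_of_le hμ (hbounds i).1
  have hnonneg : ∀ i j, 0 ≤ C i j := by
    intro i j
    rw [hentry]
    have h2 : 0 ≤ γ^2 * (σv i * σv j) :=
      mul_nonneg (sq_nonneg γ) (mul_nonneg (hσpos i).le (hσpos j).le)
    by_cases h : i = j <;> simp [h] <;>
      nlinarith [sq_nonneg (1 - γ * σv j), sq_nonneg (γ * σv j), hσpos j, hγpos]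
  have hrow : ∀ i, ∑ j, C i j ≤ 1 - γ * μ := by
    intro i
    -- handle d = 0 (vacuous) vs d > 0
    have hSpos : 0 ≤ S := Finset.sum_nonneg fun j _ => (hσpos j).le
    have hLpos : 0 < L := lt_of_lt_of_le hμ (le_trans (hbounds i).1 (hbounds i).2)
    have hLS : 0 < 2 * (L + S) := by positivity
    have hγLS : γ * (2 * (L + S)) ≤ 1 := (le_div_iff₀ hLS).mp hγ
    have hrowval : ∑ j, C i j = (1 - γ * σv i)^2 + γ^2 * (σv i)^2 + γ^2 * σv i * S := by
      have : ∀ j, C i j = (if i = j then (1 - γ * σv i)^2 + γ^2 * (σv i)^2 else 0)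
          + γ^2 * (σv i * σv j) := hentry i
      rw [Finset.sum_congr rfl fun j _ => this j, Finset.sum_add_distrib,
        Finset.sum_ite_eq Finset.univ i
          (fun _ => (1 - γ * σv i)^2 + γ^2 * (σv i)^2), ← Finset.mul_sum]
      simp only [Finset.mem_univ, if_true, ← Finset.mul_sum, ← hS]
      ring
    rw [hrowval]
    have key : (1 - γ * σv i)^2 + γ^2 * (σv i)^2 + γ^2 * σv i * S
        = 1 - γ * σv i * (2 - 2 * (γ * σv i) - γ * S) := by ring
    rw [key]
    have hfac : γ * (2 * σv i + S) ≤ 1 := by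
      have : 2 * σv i + S ≤ 2 * (L + S) := by
        nlinarith [(hbounds i).2, hSpos]
      nlinarith
    have h1 : γ * σv i * (2 - 2 * (γ * σv i) - γ * S) ≥ γ * σv i * 1 := by
      have hpos : 0 < γ * σv i := mul_pos hγpos (hσpos i)
      have : 1 ≤ 2 - 2 * (γ * σv i) - γ * S := by nlinarith
      nlinarith
    have h2 : γ * μ ≤ γ * σv i := mul_le_mul_of_nonneg_left (hbounds i).1 hγpos.le
    nlinarith
  have hmul : ∀ i, (C.mulVec (fun _ => (1 : ℝ))) i = ∑ j, C i j := by
    intro i; simp [mulVec, dotProduct]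
  have hμle : ∀ (_ : Fin d), 0 ≤ 1 - γ * μ := by
    intro i
    have h0 : 0 ≤ ∑ j, C i j := Finset.sum_nonneg fun j _ => hnonneg i j
    linarith [hrow i]
  refine ⟨hnonneg, fun i => by rw [hmul]; exact hrow i, ?_⟩
  intro n
  induction n with
  | zero =>
    intro i
    simp [mulVec, dotProduct, Matrix.one_apply]
  | succ n ih =>
    intro i
    have hge : 0 ≤ 1 - γ * μ := hμle i
    rw [pow_succ', ← Matrix.mulVec_mulVec]
    calc |(C.mulVec ((C ^ n).mulVec fun _ => (1:ℝ))) i|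
        ≤ ∑ j, |C i j * ((C ^ n).mulVec fun _ => (1:ℝ)) j| := by
          rw [mulVec, dotProduct]
          exact Finset.abs_sum_le_sum_abs _ _
      _ ≤ ∑ j, C i j * (1 - γ * μ) ^ n := by
          apply Finset.sum_le_sum
          intro j _
          rw [abs_mul, abs_of_nonneg (hnonneg i j)]
          exact mul_le_mul_of_nonneg_left (ih j) (hnonneg i j)
      _ = (∑ j, C i j) * (1 - γ * μ) ^ n := by rw [← Finset.sum_mul]
      _ ≤ (1 - γ * μ) * (1 - γ * μ) ^ n := by
          apply mul_le_mul_of_nonneg_right (hrow i) (by positivity)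
      _ = (1 - γ * μ) ^ (n + 1) := by ring
end

section
/- (Matrix power bound via pseudospectral radius) For any square complex matrix A, any ε > 0, and all n ≥ 0, ‖Aⁿ‖ ≤ (ρ_ε(A))^{n+1} / ε, where ρ_ε(A) is the ε-pseudospectral radius of A. -/
open Matrix

/-- The ℓ²-operator norm of a complex matrix. -/
noncomputable def l2OpNorm {d : ℕ} (A : Matrix (Fin d) (Fin d) ℂ) : ℝ :=
  ‖LinearMap.toContinuousLinearMap (Matrix.toEuclideanLin A)‖

/-- The ε-pseudospectrum of a square complex matrix:
`σ_ε(A) = σ(A) ∪ { z : ‖(A − zI)⁻¹‖ ≥ 1/ε }`. -/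
noncomputable def pseudospectrum {d : ℕ} (ε : ℝ) (A : Matrix (Fin d) (Fin d) ℂ) : Set ℂ :=
  spectrum ℂ A ∪ { z : ℂ | 1 / ε ≤ l2OpNorm (A - z • 1)⁻¹ }

/-- The ε-pseudospectral radius `ρ_ε(A) = sup{ |z| : z ∈ σ_ε(A) }`. -/
noncomputable def pseudospectralRadius {d : ℕ} (ε : ℝ) (A : Matrix (Fin d) (Fin d) ℂ) : ℝ :=
  sSup ((fun z : ℂ => ‖z‖) '' pseudospectrum ε A)

/-!
`Aⁿ` is the `n`-th Taylor coefficient at `0` of `w ↦ (1 - w • A)⁻¹ = w⁻¹ • (w⁻¹ • 1 - A)⁻¹`,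
which is holomorphic on the disc `‖w‖ ≤ r⁻¹` whenever the spectrum of `A` lies in the open disc of
radius `r`. For `r > ρ_ε(A)` every `z` with `‖z‖ = r` lies outside the pseudospectrum, so the
resolvent there has norm `< 1/ε`, and Cauchy's estimate on the circle `‖w‖ = r⁻¹` gives
`‖Aⁿ‖ ≤ r^(n+1)/ε`. Letting `r` decrease to `ρ_ε(A)` gives the bound.
-/

open Metric Set
open scoped NNReal ENNReal Real Matrix.Norms.L2Operator

section CauchyEstimate

variable {E : Type*} [NormedAddCommGroup E] [NormedSpace ℂ E]

theorem norm_cauchyPowerSeries_le_of_forall_mem_sphere_norm_le {f : ℂ → E} {c : ℂ} {R C : ℝ}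
    (hR : 0 ≤ R) (hC : ∀ z ∈ sphere c R, ‖f z‖ ≤ C) (n : ℕ) :
    ‖cauchyPowerSeries f c R n‖ ≤ C * R⁻¹ ^ n := by
  have hintegral : ∫ θ in 0..2 * π, ‖f (circleMap c R θ)‖ ≤ C * (2 * π) :=
    calc ∫ θ in 0..2 * π, ‖f (circleMap c R θ)‖
        ≤ ‖∫ θ in 0..2 * π, ‖f (circleMap c R θ)‖‖ := Real.le_norm_self _
      _ ≤ C * |2 * π - 0| := intervalIntegral.norm_integral_le_of_norm_le_const fun θ _ => by
          rw [norm_norm]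
          exact hC _ (circleMap_mem_sphere c hR θ)
      _ = C * (2 * π) := by rw [sub_zero, abs_of_pos Real.two_pi_pos]
  calc ‖cauchyPowerSeries f c R n‖
      ≤ ((2 * π)⁻¹ * ∫ θ in 0..2 * π, ‖f (circleMap c R θ)‖) * |R|⁻¹ ^ n :=
        norm_cauchyPowerSeries_le f c R n
    _ ≤ ((2 * π)⁻¹ * (C * (2 * π))) * R⁻¹ ^ n := by rw [abs_of_nonneg hR]; gcongr
    _ = C * R⁻¹ ^ n := by field_simp

theorem HasFPowerSeriesAt.norm_coeff_le_of_forall_mem_sphere_norm_le [CompleteSpace E]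
    {f : ℂ → E} {p : FormalMultilinearSeries ℂ ℂ E} {c : ℂ} {R : ℝ≥0} {C : ℝ}
    (hp : HasFPowerSeriesAt f p c) (hR : 0 < R) (hf : DifferentiableOn ℂ f (closedBall c R))
    (hC : ∀ z ∈ sphere c R, ‖f z‖ ≤ C) (n : ℕ) :
    ‖p n‖ ≤ C * (R : ℝ)⁻¹ ^ n := by
  rw [hp.eq_formalMultilinearSeries (hf.hasFPowerSeriesOnBall hR).hasFPowerSeriesAt]
  exact norm_cauchyPowerSeries_le_of_forall_mem_sphere_norm_le R.coe_nonneg hC n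

end CauchyEstimate

theorem Ring.inverse_one_sub_smul_eq_inv_smul_resolvent {𝕜 A : Type*} [Field 𝕜] [Ring A]
    [Algebra 𝕜 A] (a : A) {w : 𝕜} (hw : w ≠ 0) :
    Ring.inverse (1 - w • a) = w⁻¹ • resolvent a w⁻¹ := by
  have h := spectrum.units_smul_resolvent_self (r := Units.mk0 w⁻¹ (inv_ne_zero hw)) (a := a)
  simp only [Units.smul_def, Units.val_inv_eq_inv_val, Units.val_mk0, inv_inv] at h
  rw [h, resolvent, map_one]

theorem Ring.inverse_neg {R : Type*} [Ring R] (x : R) : Ring.inverse (-x) = -Ring.inverse x := by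
  by_cases hx : IsUnit x
  · obtain ⟨u, rfl⟩ := hx
    rw [← Units.val_neg, Ring.inverse_unit, Ring.inverse_unit]
    simp
  · rw [Ring.inverse_non_unit x hx, Ring.inverse_non_unit _ (by rwa [IsUnit.neg_iff]), neg_zero]

section BanachAlgebra

variable {A : Type*} [NormedRing A] [NormedAlgebra ℂ A] [CompleteSpace A]

theorem norm_pow_le_of_forall_mem_sphere_norm_resolvent_le {a : A} {r M : ℝ}
    (hr : spectralRadius ℂ a < ENNReal.ofReal r)
    (hM : ∀ z ∈ sphere (0 : ℂ) r, ‖resolvent a z‖ ≤ M) (n : ℕ) :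
    ‖a ^ n‖ ≤ r ^ (n + 1) * M := by
  have hr₀ : 0 < r := ENNReal.ofReal_pos.mp (pos_of_gt hr)
  set R : ℝ≥0 := r.toNNReal⁻¹ with hR
  have hR_coe : (R : ℝ) = r⁻¹ := by rw [hR, NNReal.coe_inv, Real.coe_toNNReal _ hr₀.le]
  have hR_lt : (R : ℝ≥0∞) < (spectralRadius ℂ a)⁻¹ := by
    rw [hR, ENNReal.coe_inv (by simpa using hr₀)]
    exact ENNReal.inv_lt_inv.mpr hr
  have hbound : ∀ w ∈ sphere (0 : ℂ) R, ‖Ring.inverse (1 - w • a)‖ ≤ r * M := by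
    intro w hw
    have hw_norm : ‖w‖ = r⁻¹ := by rwa [mem_sphere_zero_iff_norm, hR_coe] at hw
    have hw₀ : w ≠ 0 := norm_pos_iff.mp (hw_norm ▸ inv_pos.mpr hr₀)
    rw [Ring.inverse_one_sub_smul_eq_inv_smul_resolvent a hw₀, norm_smul, norm_inv, hw_norm,
      inv_inv]
    exact mul_le_mul_of_nonneg_left (hM _ (by simp [hw_norm])) hr₀.le
  calc ‖a ^ n‖ = ‖ContinuousMultilinearMap.mkPiRing ℂ (Fin n) (a ^ n)‖ :=
        (ContinuousMultilinearMap.norm_mkPiRing _).symm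
    _ ≤ r * M * (R : ℝ)⁻¹ ^ n :=
        (spectrum.hasFPowerSeriesOnBall_inverse_one_sub_smul ℂ a).hasFPowerSeriesAt
          |>.norm_coeff_le_of_forall_mem_sphere_norm_le (by positivity)
            (spectrum.differentiableOn_inverse_one_sub_smul hR_lt) hbound n
    _ = r ^ (n + 1) * M := by rw [hR_coe, inv_inv]; ring

theorem norm_pow_le_of_forall_norm_resolvent_le {a : A} {ρ M : ℝ} (hρ : 0 ≤ ρ)
    (hσ : ∀ z ∈ spectrum ℂ a, ‖z‖ ≤ ρ) (hM : ∀ z : ℂ, ρ < ‖z‖ → ‖resolvent a z‖ ≤ M) (n : ℕ) :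
    ‖a ^ n‖ ≤ ρ ^ (n + 1) * M := by
  have hradius : spectralRadius ℂ a ≤ ENNReal.ofReal ρ :=
    iSup₂_le fun z hz => by
      rw [← ENNReal.ofReal_coe_nnreal, coe_nnnorm]
      exact ENNReal.ofReal_le_ofReal (hσ z hz)
  have hcont : ContinuousWithinAt (fun r : ℝ => r ^ (n + 1) * M) (Ioi ρ) ρ :=
    (by fun_prop : Continuous fun r : ℝ => r ^ (n + 1) * M).continuousWithinAt
  refine ge_of_tendsto hcont (eventually_nhdsWithin_of_forall fun r (hr : ρ < r) => ?_)
  refine norm_pow_le_of_forall_mem_sphere_norm_resolvent_le ?_ (fun z hz => hM z ?_) n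
  · exact hradius.trans_lt ((ENNReal.ofReal_lt_ofReal_iff_of_nonneg hρ).mpr hr)
  · rwa [mem_sphere_zero_iff_norm.mp hz]

theorem isBounded_setOf_le_norm_resolvent (a : A) {δ : ℝ} (hδ : 0 < δ) :
    Bornology.IsBounded {z : ℂ | δ ≤ ‖resolvent a z‖} := by
  rw [Bornology.isBounded_def]
  filter_upwards [(spectrum.resolvent_tendsto_cobounded a).eventually (ball_mem_nhds 0 hδ)]
    with z hz
  simpa using hz

end BanachAlgebra

section Pseudospectrum

variable {d : ℕ}

-- `‖A‖` is the `Matrix.Norms.L2Operator` norm, under which the matrices form a Banach algebra.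
theorem l2OpNorm_eq_norm (A : Matrix (Fin d) (Fin d) ℂ) : l2OpNorm A = ‖A‖ := rfl

theorem l2OpNorm_inv_sub_smul_one (A : Matrix (Fin d) (Fin d) ℂ) (z : ℂ) :
    l2OpNorm (A - z • 1)⁻¹ = ‖resolvent A z‖ := by
  rw [l2OpNorm_eq_norm, resolvent, Algebra.algebraMap_eq_smul_one, ← neg_sub,
    nonsing_inv_eq_ringInverse, Ring.inverse_neg, norm_neg]

theorem pseudospectrum_eq (ε : ℝ) (A : Matrix (Fin d) (Fin d) ℂ) :
    pseudospectrum ε A = spectrum ℂ A ∪ {z | 1 / ε ≤ ‖resolvent A z‖} := by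
  simp only [pseudospectrum, l2OpNorm_inv_sub_smul_one]

theorem bddAbove_norm_image_pseudospectrum {ε : ℝ} (hε : 0 < ε) (A : Matrix (Fin d) (Fin d) ℂ) :
    BddAbove ((fun z : ℂ => ‖z‖) '' pseudospectrum ε A) := by
  obtain ⟨C, hC⟩ := isBounded_iff_forall_norm_le.mp <|
    (spectrum.isBounded A).union (isBounded_setOf_le_norm_resolvent A (one_div_pos.mpr hε))
  refine ⟨C, ?_⟩
  rintro _ ⟨z, hz, rfl⟩
  exact hC z (pseudospectrum_eq ε A ▸ hz)

theorem norm_le_pseudospectralRadius {ε : ℝ} (hε : 0 < ε) {A : Matrix (Fin d) (Fin d) ℂ} {z : ℂ}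
    (hz : z ∈ pseudospectrum ε A) : ‖z‖ ≤ pseudospectralRadius ε A :=
  le_csSup (bddAbove_norm_image_pseudospectrum hε A) ⟨z, hz, rfl⟩

theorem pseudospectralRadius_nonneg (ε : ℝ) (A : Matrix (Fin d) (Fin d) ℂ) :
    0 ≤ pseudospectralRadius ε A :=
  Real.sSup_nonneg <| by
    rintro _ ⟨z, -, rfl⟩
    exact norm_nonneg z

end Pseudospectrum

/-- Matrix power bound via the pseudospectral radius: for any square complex matrix `A`,
any `ε > 0` and all `n ≥ 0`, `‖Aⁿ‖ ≤ ρ_ε(A)^{n+1} / ε`. -/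
theorem matrix_power_le_pseudospectralRadius
    {d : ℕ} (A : Matrix (Fin d) (Fin d) ℂ) (ε : ℝ) (hε : 0 < ε) (n : ℕ) :
    l2OpNorm (A ^ n) ≤ (pseudospectralRadius ε A) ^ (n + 1) / ε := by
  rw [l2OpNorm_eq_norm, div_eq_mul_one_div]
  refine norm_pow_le_of_forall_norm_resolvent_le (pseudospectralRadius_nonneg ε A)
    (fun z hz => norm_le_pseudospectralRadius hε (mem_union_left _ hz)) (fun z hz => ?_) n
  have hz_notMem : z ∉ pseudospectrum ε A := fun hmem =>
    (norm_le_pseudospectralRadius hε hmem).not_gt hz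
  rw [pseudospectrum_eq] at hz_notMem
  exact (not_le.mp fun h => hz_notMem (Or.inr h)).le
end
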